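/- Let C be a category with object A such that every arrow in C is a strict epimorphism, every object X admits an arrow A → X, and Hom(A, -) preserves strict epimorphisms. Then for every object X, the right action of the group Aut(A) on the set Hom(A, X) by precomposition is transitive. -/

import Mathlib

open CategoryTheory

universe v u

/-- Grothendieck strict epimorphism. -/
def IsStrictEpi {C : Type u} [Category.{v} C] {X Y : C} (f : X ⟶ Y) : Prop :=
  ∀ {Z : C} (g : X ⟶ Z),
    (∀ {W : C} (s t : W ⟶ X), s ≫ f = t ≫ f → s ≫ g = t ≫ g) →
    ∃! h : Y ⟶ Z, f ≫ h = g

/-!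
Postcomposition with any arrow `f` is a strict epimorphism of sets, hence surjective. Given
`x y : A ⟶ X`, surjectivity of `(· ≫ x)` produces an endomorphism `g` with `g ≫ x = y`, and it
remains to see that `g` is invertible. Surjectivity of `(· ≫ g)` on `End A` gives a section of `g`,
so every endomorphism of `A` is split epi; a section `s` of `g` is then split mono and epi, hence
an isomorphism, and so is its retraction `g`.
-/

lemma IsStrictEpi.epi {C : Type u} [Category.{v} C] {X Y : C} {f : X ⟶ Y}
    (hf : IsStrictEpi f) : Epi f := by
  refine ⟨fun {Z} u v huv => ?_⟩
  obtain ⟨_, -, huniq⟩ := hf (f ≫ u) fun s t hst => by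
    rw [← Category.assoc, ← Category.assoc, hst]
  exact (huniq u rfl).trans (huniq v huv.symm).symm

lemma IsStrictEpi.surjective_of_types {α β : Type v} {f : α → β}
    (hf : IsStrictEpi (C := Type v) (TypeCat.ofHom f)) : Function.Surjective f :=
  (ofHom_epi_iff_surjective f).mp hf.epi

lemma isIso_of_forall_isSplitEpi {C : Type u} [Category.{v} C] {A : C}
    (h : ∀ g : A ⟶ A, IsSplitEpi g) (g : A ⟶ A) : IsIso g := by
  have hsg : section_ g ≫ g = 𝟙 A := IsSplitEpi.id g
  have : IsSplitMono (section_ g) := IsSplitMono.mk' ⟨g, hsg⟩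
  have : IsSplitEpi (section_ g) := h _
  have : IsIso (section_ g) := isIso_of_epi_of_isSplitMono _
  rw [(IsIso.inv_eq_of_hom_inv_id hsg).symm]
  infer_instance

theorem stmt2_general {C : Type u} [Category.{v} C] (A : C)
    (h1 : ∀ {X Y : C} (f : X ⟶ Y), IsStrictEpi f)
    (h3 : ∀ {X Y : C} (f : X ⟶ Y), IsStrictEpi f →
      IsStrictEpi (C := Type v) (X := A ⟶ X) (Y := A ⟶ Y) (TypeCat.ofHom (fun g : A ⟶ X => g ≫ f))) :
    ∀ (X : C) (x y : A ⟶ X), ∃ h : A ≅ A, h.hom ≫ x = y := by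
  have surj {X Y : C} (f : X ⟶ Y) : Function.Surjective fun g : A ⟶ X => g ≫ f :=
    IsStrictEpi.surjective_of_types (h3 f (h1 f))
  have hsplit (g : A ⟶ A) : IsSplitEpi g := by
    obtain ⟨s, hs⟩ := surj g (𝟙 A)
    exact IsSplitEpi.mk' ⟨s, hs⟩
  intro X x y
  obtain ⟨g, rfl⟩ := surj x y
  have := isIso_of_forall_isSplitEpi hsplit g
  exact ⟨asIso g, rfl⟩

/-- The right action of `Aut(A)` on `Hom(A, X)` by precomposition is transitive. -/
theorem stmt2 {C : Type u} [Category.{v} C] (A : C)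
    (h1 : ∀ {X Y : C} (f : X ⟶ Y), IsStrictEpi f)
    (h2 : ∀ X : C, Nonempty (A ⟶ X))
    (h3 : ∀ {X Y : C} (f : X ⟶ Y), IsStrictEpi f →
      IsStrictEpi (C := Type v) (X := A ⟶ X) (Y := A ⟶ Y) (TypeCat.ofHom (fun g : A ⟶ X => g ≫ f))) :
    ∀ (X : C) (x y : A ⟶ X), ∃ h : A ≅ A, h.hom ≫ x = y :=
  stmt2_general A h1 h3
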